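/- arXiv:2306.00493 — 2 statements merged into one kernel-verified Lean document; each statement's English description precedes it below -/
import Mathlib

section
/- Let S be a finite monoid and A = {0, 1, …, k−1} with k ≥ 3. The full S-relational clone SRel(A) is finitely generated: SRel(A) = [ { (Δ_A, ∇_A, …, ∇_A), (≤, ≤, …, ≤), (≠, ≠, …, ≠) } ]_S, where (σ, σ', …, σ') denotes the binary S-relation ρ with ρ_e = σ and ρ_s = σ' for all s ∈ S \ {e}, Δ_A := {(x,x) : x ∈ A}, ∇_A := A², ≤ is the natural linear order on A, and ≠ := {(x,y) ∈ A² : x ≠ y}. -/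
namespace SPreclone

/-- An `S`-operation on `A`: an `(n+1)`-ary operation together with a signum
assigning an element of `S` to each argument. -/
structure SOp (S A : Type*) where
  n : ℕ
  fn : (Fin (n + 1) → A) → A
  sgn : Fin (n + 1) → S

/-- An `S`-relation on `A`: a family of `(m+1)`-ary relations indexed by `S`. -/
structure SRel (S A : Type*) where
  m : ℕ
  rel : S → Set (Fin (m + 1) → A)

section

variable {S A : Type*} [Monoid S]

/-- `f` S-preserves `ρ`. -/
def SPreserves (f : SOp S A) (ρ : SRel S A) : Prop :=
  ∀ s : S, ∀ r : Fin (f.n + 1) → (Fin (ρ.m + 1) → A),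
    (∀ i, r i ∈ ρ.rel (f.sgn i * s)) →
    (fun j => f.fn fun i => r i j) ∈ ρ.rel s

/-- `S`-polymorphisms of a set of `S`-relations. -/
def SPol (Q : Set (SRel S A)) : Set (SOp S A) := { f | ∀ ρ ∈ Q, SPreserves f ρ }

/-- Invariant `S`-relations of a set of `S`-operations. -/
def SInv (F : Set (SOp S A)) : Set (SRel S A) := { ρ | ∀ f ∈ F, SPreserves f ρ }

/-- The identity operation, with signum `(e)`. -/
def idOp (S A : Type*) [Monoid S] : SOp S A := ⟨0, fun x => x 0, fun _ => 1⟩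

/-- Cyclic shift `ζ` of the arguments (and the signa). -/
def cycOp (f : SOp S A) : SOp S A :=
  ⟨f.n, fun x => f.fn fun j => x (j + 1), fun i => f.sgn (i - 1)⟩

/-- Transposition `τ` of the first two arguments (and their signa). -/
def swapOp (f : SOp S A) : SOp S A :=
  ⟨f.n, fun x => f.fn fun j => x (Equiv.swap 0 1 j), fun i => f.sgn (Equiv.swap 0 1 i)⟩

/-- `∇^s`: adding a fictitious first argument with signum `s`. -/
def nablaOp (s : S) (f : SOp S A) : SOp S A :=
  ⟨f.n + 1, fun x => f.fn fun j => x j.succ, Fin.cases (motive := fun _ => S) s f.sgn⟩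

open Classical in
/-- `Δ`: identification of the first two arguments when they have the same signum
(otherwise, and for unary operations, `Δ f := f`). -/
noncomputable def deltaOp (f : SOp S A) : SOp S A :=
  match f with
  | ⟨0, fn, sgn⟩ => ⟨0, fn, sgn⟩
  | ⟨m + 1, fn, sgn⟩ =>
    if sgn 0 = sgn 1 then
      ⟨m, fun x => fn fun j => x ⟨j.val - 1, by have := j.isLt; omega⟩,
        fun i => sgn i.succ⟩
    else ⟨m + 1, fn, sgn⟩

/-- Composition `(f ∘ g)(x₁,…,x_m,x_{m+1},…,x_{m+n-1}) = f(g(x₁,…,x_m),x_{m+1},…,x_{m+n-1})`,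
with signum `(s'₁s₁, …, s'_m s₁, s₂, …, s_n)`. -/
def compOp (f g : SOp S A) : SOp S A :=
  ⟨g.n + f.n,
   fun x => f.fn fun k => Fin.cases (motive := fun _ => A)
     (g.fn fun i => x ⟨i.val, by have := i.isLt; omega⟩)
     (fun j => x ⟨g.n + 1 + j.val, by have := j.isLt; omega⟩) k,
   fun i =>
     if h : i.val < g.n + 1 then g.sgn ⟨i.val, h⟩ * f.sgn 0
     else f.sgn ⟨i.val - g.n, by have := i.isLt; omega⟩⟩

/-- A set of `S`-operations is an `S`-preclone if it contains the identity and is closed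
under `ζ`, `τ`, `∇^s`, `Δ` and composition. -/
def IsSPreclone (F : Set (SOp S A)) : Prop :=
  idOp S A ∈ F ∧
  (∀ f ∈ F, cycOp f ∈ F) ∧
  (∀ f ∈ F, swapOp f ∈ F) ∧
  (∀ (s : S), ∀ f ∈ F, nablaOp s f ∈ F) ∧
  (∀ f ∈ F, deltaOp f ∈ F) ∧
  (∀ f ∈ F, ∀ g ∈ F, compOp f g ∈ F)

/-- The `S`-preclone generated by `F` (the least `S`-preclone containing `F`). -/
def SSg (F : Set (SOp S A)) : Set (SOp S A) := ⋂₀ { G | IsSPreclone G ∧ F ⊆ G }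

/-- `δ^S := (Δ_A)_{s ∈ S}`. -/
def deltaS (S A : Type*) : SRel S A := ⟨1, fun _ => { a | a 0 = a 1 }⟩

/-- Componentwise cyclic shift of coordinates. -/
def cycRel (ρ : SRel S A) : SRel S A :=
  ⟨ρ.m, fun s => { b | (fun i => b (i - 1)) ∈ ρ.rel s }⟩

/-- Componentwise transposition of the first two coordinates. -/
def swapRel (ρ : SRel S A) : SRel S A :=
  ⟨ρ.m, fun s => { b | (fun i => b (Equiv.swap 0 1 i)) ∈ ρ.rel s }⟩

/-- Componentwise deletion of the first coordinate (identity on unary relations). -/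
def prRel (ρ : SRel S A) : SRel S A :=
  match ρ with
  | ⟨0, r⟩ => ⟨0, r⟩
  | ⟨m + 1, r⟩ => ⟨m, fun s => { b | ∃ a ∈ r s, b = fun j => a j.succ }⟩

/-- Componentwise Cartesian product. -/
def prodRel (ρ ρ' : SRel S A) : SRel S A :=
  ⟨ρ.m + ρ'.m + 1, fun s =>
    { c | (fun i : Fin (ρ.m + 1) => c ⟨i.val, by have := i.isLt; omega⟩) ∈ ρ.rel s ∧
          (fun i : Fin (ρ'.m + 1) => c ⟨ρ.m + 1 + i.val, by have := i.isLt; omega⟩) ∈ ρ'.rel s }⟩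

/-- Componentwise intersection; empty if the arities differ. -/
def interRel (ρ ρ' : SRel S A) : SRel S A :=
  if h : ρ.m = ρ'.m then
    ⟨ρ.m, fun s => { a | a ∈ ρ.rel s ∧
        (fun i : Fin (ρ'.m + 1) => a (Fin.cast (by omega) i)) ∈ ρ'.rel s }⟩
  else ⟨ρ.m, fun _ => ∅⟩

/-- Index translation `μ_v(ρ) := (ρ_{sv})_{s ∈ S}`. -/
def muRel (v : S) (ρ : SRel S A) : SRel S A := ⟨ρ.m, fun s => ρ.rel (s * v)⟩

/-- `v`-self-intersection `(⊓^v ρ)_s := ⋂ { ρ_{s'} ∣ s'v = s }`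
(an empty intersection being the full relation). -/
def selfInterRel (v : S) (ρ : SRel S A) : SRel S A :=
  ⟨ρ.m, fun s => { a | ∀ s' : S, s' * v = s → a ∈ ρ.rel s' }⟩

/-- A set of `S`-relations is an `S`-relational clone if it contains `δ^S` and is
closed under `ζ`, `τ`, `pr`, `×`, `∧`, `μ_v` and `⊓^v`. -/
def IsSRelClone (Q : Set (SRel S A)) : Prop :=
  deltaS S A ∈ Q ∧
  (∀ ρ ∈ Q, cycRel ρ ∈ Q) ∧
  (∀ ρ ∈ Q, swapRel ρ ∈ Q) ∧
  (∀ ρ ∈ Q, prRel ρ ∈ Q) ∧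
  (∀ ρ ∈ Q, ∀ ρ' ∈ Q, prodRel ρ ρ' ∈ Q) ∧
  (∀ ρ ∈ Q, ∀ ρ' ∈ Q, interRel ρ ρ' ∈ Q) ∧
  (∀ (v : S), ∀ ρ ∈ Q, muRel v ρ ∈ Q) ∧
  (∀ (v : S), ∀ ρ ∈ Q, selfInterRel v ρ ∈ Q)

/-- The `S`-relational clone generated by `Q`. -/
def SRg (Q : Set (SRel S A)) : Set (SRel S A) := ⋂₀ { R | IsSRelClone R ∧ Q ⊆ R }

/-- `Γ_F(ρ)`: the least `S`-relation of the same arity containing `ρ` and invariant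
for `F` (defined as the intersection of all such). -/
def Gamma (F : Set (SOp S A)) (ρ : SRel S A) : SRel S A :=
  ⟨ρ.m, fun s => ⋂ g ∈ { g : S → Set (Fin (ρ.m + 1) → A) |
      (⟨ρ.m, g⟩ : SRel S A) ∈ SInv F ∧ ∀ t, ρ.rel t ⊆ g t }, g s⟩

/-- Trivial `S`-operations (trivial projections): projections whose essential
argument has signum `e`. -/
def SJ (S A : Type*) [Monoid S] : Set (SOp S A) :=
  { f | ∃ i : Fin (f.n + 1), f.sgn i = 1 ∧ ∀ x, f.fn x = x i }

/-- A diagonal relation: empty, or defined by an equivalence relation on the coordinates. -/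
def IsDiagonal {A : Type*} {m : ℕ} (σ : Set (Fin m → A)) : Prop :=
  σ = ∅ ∨ ∃ ε : Fin m → Fin m → Prop, Equivalence ε ∧ σ = { a | ∀ i j, ε i j → a i = a j }

/-- `S`-diagonal `S`-relations. -/
def SD (S A : Type*) [Monoid S] : Set (SRel S A) :=
  { ρ | (∀ s, IsDiagonal (ρ.rel s)) ∧
      ∀ s t : S, ({ x | ∃ u, x = u * s } : Set S) ⊆ { x | ∃ u, x = u * t } →
        ρ.rel s ⊆ ρ.rel t }

/-- Projection of an `S`-relation to the rows `z 0, …, z t` (componentwise). -/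
def prMulti {t : ℕ} (ρ : SRel S A) (z : Fin (t + 1) → Fin (ρ.m + 1)) : SRel S A :=
  ⟨t, fun s => { b | ∃ a ∈ ρ.rel s, b = fun j => a (z j) }⟩

/-- One step of the inductive construction of `Γ_F(ρ)`:
`R s ∪ { f(r₁,…,r_n) ∣ f ∈ F, r_j ∈ R (sgn(f)_j * s) }`. -/
def gammaStep (F : Set (SOp S A)) {m : ℕ}
    (R : S → Set (Fin (m + 1) → A)) : S → Set (Fin (m + 1) → A) :=
  fun s => R s ∪ { b | ∃ f ∈ F, ∃ r : Fin (f.n + 1) → (Fin (m + 1) → A),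
    (∀ j, r j ∈ R (f.sgn j * s)) ∧ b = fun z => f.fn fun j => r j z }

/-- `χ` is (a presentation of) the `S`-relation `χ^λ`: its rows are enumerated by
*all* tuples of `A^n` via `e`, and its `s`-component consists exactly of the columns
`κ_i` with `λ i = s`. -/
def IsChi {n : ℕ} (lam : Fin n → S) (χ : SRel S A) : Prop :=
  ∃ e : Fin (χ.m + 1) ≃ (Fin n → A),
    ∀ s, χ.rel s = { c | ∃ i, lam i = s ∧ c = fun z => e z i }

/-- `γ_Q(ρ)`: the least `S`-relation of the same arity containing `ρ` and belonging
to the `S`-relational clone generated by `Q` (defined as the intersection of all such). -/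
def gammaQ (Q : Set (SRel S A)) (ρ : SRel S A) : SRel S A :=
  ⟨ρ.m, fun s => ⋂ g ∈ { g : S → Set (Fin (ρ.m + 1) → A) |
      (⟨ρ.m, g⟩ : SRel S A) ∈ SRg Q ∧ ∀ t, ρ.rel t ⊆ g t }, g s⟩

/-- `π`-dual of an `S`-operation. -/
def opPi (π : Equiv.Perm A) (f : SOp S A) : SOp S A :=
  ⟨f.n, fun x => π (f.fn fun i => π.symm (x i)), f.sgn⟩

/-- `π`-dual of an `S`-relation. -/
def relPi (π : Equiv.Perm A) (ρ : SRel S A) : SRel S A :=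
  ⟨ρ.m, fun s => { b | ∃ a ∈ ρ.rel s, b = fun i => π (a i) }⟩

/-- `h`-dual of an `S`-operation (only the signum changes). -/
def opH (h : S ≃* S) (f : SOp S A) : SOp S A :=
  ⟨f.n, f.fn, fun i => h (f.sgn i)⟩

/-- `h`-dual of an `S`-relation: `ρ^h := (ρ_{h⁻¹(s)})_{s ∈ S}`. -/
def relH (h : S ≃* S) (ρ : SRel S A) : SRel S A :=
  ⟨ρ.m, fun s => ρ.rel (h.symm s)⟩

end

/-- An ordinary (unsigned) operation on `A`. -/
structure UOp (A : Type*) where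
  n : ℕ
  fn : (Fin (n + 1) → A) → A

/-- An ordinary (unsigned) relation on `A`. -/
structure URel (A : Type*) where
  m : ℕ
  rel : Set (Fin (m + 1) → A)

/-- Ordinary preservation of a relation by an operation. -/
def UPreserves {A : Type*} (f : UOp A) (σ : URel A) : Prop :=
  ∀ r : Fin (f.n + 1) → (Fin (σ.m + 1) → A),
    (∀ i, r i ∈ σ.rel) → (fun j => f.fn fun i => r i j) ∈ σ.rel

/-- Polymorphisms of a set of ordinary relations. -/
def UPol {A : Type*} (R : Set (URel A)) : Set (UOp A) := { f | ∀ σ ∈ R, UPreserves f σ }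

/-- A clone: contains all projections and is closed under composition. -/
def IsClone {A : Type*} (C : Set (UOp A)) : Prop :=
  (∀ (n : ℕ) (i : Fin (n + 1)), (⟨n, fun x => x i⟩ : UOp A) ∈ C) ∧
  (∀ f ∈ C, ∀ (m : ℕ) (g : Fin (f.n + 1) → ((Fin (m + 1) → A) → A)),
    (∀ i, (⟨m, g i⟩ : UOp A) ∈ C) → (⟨m, fun x => f.fn fun i => g i x⟩ : UOp A) ∈ C)

/-- The clone generated by a set of operations. -/
def CloneGen {A : Type*} (G : Set (UOp A)) : Set (UOp A) := ⋂₀ { C | IsClone C ∧ G ⊆ C }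

/-!
Every `S`-relation `ρ` is the intersection, over `v ∈ S`, of the `S`-relations equal to `ρ_v` at
the index `v` and full elsewhere. Applying `⊓^v` to `(Δ_A, ∇_A, …, ∇_A)` yields the binary
`S`-relation that is `Δ_A` at `v` and full elsewhere, and with it each of these pieces is
defined from the constant `S`-relation `(ρ_v, …, ρ_v)`. So it suffices that the clone contains
all constant `S`-relations. As in the classical `Inv Pol` Galois connection on a finite set,
this holds once every operation preserving `≤` and `≠` is a projection. For such an operation
`f` and `a < b`, call a set `T` of arguments decisive for `(a, b)` if `f` returns `b` on the
tuple that is `b` on `T` and `a` elsewhere. As in Arrow's theorem, the decisive sets do not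
depend on `(a, b)`, and a third element of `A` makes them closed under intersection; so they
form an ultrafilter on the finitely many arguments, which is principal, and its generator is
the argument `f` projects to.
-/

theorem _root_.Finite.exists_equiv_fin_succ (α : Type*) [Finite α] [Nonempty α] :
    ∃ n, Nonempty (α ≃ Fin (n + 1)) := by
  obtain ⟨p, ⟨e⟩⟩ := Finite.exists_equiv_fin α
  obtain ⟨n, rfl⟩ := Nat.exists_eq_add_one.mpr (e (Classical.arbitrary α)).pos
  exact ⟨n, ⟨e⟩⟩

theorem _root_.Fin.exists_append_eq {α : Type*} {m M : ℕ} (a : Fin (m + 1) → α)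
    (b : Fin (M + 1) → α) : ∃ c : Fin (m + M + 1 + 1) → α,
      (fun i : Fin (m + 1) => c ⟨i, by omega⟩) = a ∧
      (fun j : Fin (M + 1) => c ⟨m + 1 + j, by omega⟩) = b :=
  ⟨fun x => Fin.append a b (x.cast (by omega)), funext (Fin.append_left a b),
    funext (Fin.append_right a b)⟩

namespace IsSRelClone

variable {S A : Type*} [Monoid S] {R : Set (SRel S A)}

theorem inter_mem (hR : IsSRelClone R) {n : ℕ} {r r' : S → Set (Fin (n + 1) → A)}
    (hr : ⟨n, r⟩ ∈ R) (hr' : ⟨n, r'⟩ ∈ R) : ⟨n, fun s => r s ∩ r' s⟩ ∈ R := by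
  have h := hR.2.2.2.2.2.1 _ hr _ hr'
  rwa [interRel, dif_pos rfl] at h

theorem tail_mem (hR : IsSRelClone R) {n : ℕ} {r : S → Set (Fin (n + 2) → A)}
    (hr : ⟨n + 1, r⟩ ∈ R) : ⟨n, fun s => Fin.tail '' r s⟩ ∈ R := by
  have h : (⟨n, fun s => {b | ∃ a ∈ r s, b = Fin.tail a}⟩ : SRel S A) ∈ R := hR.2.2.2.1 _ hr
  simpa only [Set.image, eq_comm] using h

theorem univ_zero_mem (hR : IsSRelClone R) : ⟨0, fun _ => Set.univ⟩ ∈ R := by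
  convert tail_mem hR hR.1 using 3 with s
  ext b
  simp only [Set.mem_univ, true_iff]
  exact ⟨fun _ => b 0, rfl, funext fun j => by rw [Fin.fin_one_eq_zero j]; rfl⟩

theorem init_mem (hR : IsSRelClone R) {n : ℕ} {r : S → Set (Fin (n + 1) → A)}
    (hr : ⟨n, r⟩ ∈ R) : ⟨n + 1, fun s => Fin.init ⁻¹' r s⟩ ∈ R := by
  have h := hR.2.2.2.2.1 _ hr _ hR.univ_zero_mem
  simp only [prodRel, Set.mem_univ, and_true] at h
  exact h

theorem univ_mem (hR : IsSRelClone R) (n : ℕ) : ⟨n, fun _ => Set.univ⟩ ∈ R := by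
  induction n with
  | zero => exact hR.univ_zero_mem
  | succ n ih => exact hR.init_mem ih

theorem empty_mem (hR : IsSRelClone R) (n : ℕ) : ⟨n, fun _ => ∅⟩ ∈ R := by
  have h := hR.2.2.2.2.2.1 _ (hR.univ_mem n) _ (hR.univ_mem (n + 1))
  rwa [interRel, dif_neg n.succ_ne_self.symm] at h

theorem iInter_mem (hR : IsSRelClone R) {ι : Type*} [Finite ι] {n : ℕ}
    {r : ι → S → Set (Fin (n + 1) → A)} (hr : ∀ i, ⟨n, r i⟩ ∈ R) :
    ⟨n, fun s => ⋂ i, r i s⟩ ∈ R := by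
  cases nonempty_fintype ι
  suffices ∀ I : Finset ι, ⟨n, fun s => ⋂ i ∈ I, r i s⟩ ∈ R by
    simpa using this Finset.univ
  intro I
  induction I using Finset.cons_induction with
  | empty => simpa using hR.univ_mem n
  | cons i I _ ih => simpa using hR.inter_mem (hr i) ih

theorem comap_perm_mem (hR : IsSRelClone R) {n : ℕ} (π : Equiv.Perm (Fin (n + 1)))
    {r : S → Set (Fin (n + 1) → A)} (hr : ⟨n, r⟩ ∈ R) :
    ⟨n, fun s => (· ∘ π) ⁻¹' r s⟩ ∈ R := by
  let H : Submonoid (Equiv.Perm (Fin (n + 1))) :=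
    { carrier := {π | ∀ r, ⟨n, r⟩ ∈ R → ⟨n, fun s => (· ∘ π) ⁻¹' r s⟩ ∈ R}
      mul_mem' := fun hσ hπ r hr => hσ _ (hπ r hr)
      one_mem' := fun r hr => hr }
  suffices π ∈ H from this r hr
  rcases n with _ | n
  · rw [show π = 1 from Equiv.ext fun i => Subsingleton.elim (α := Fin 1) _ _]
    exact H.one_mem
  have hcyc : (finRotate (n + 2))⁻¹ ∈ H := fun r hr => by
    have : ⇑(finRotate (n + 2))⁻¹ = fun i => i - 1 := funext fun i => by
      rw [Equiv.Perm.inv_eq_iff_eq, finRotate_apply, sub_add_cancel]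
    rw [this]
    exact hR.2.1 _ hr
  have hswap : Equiv.swap 1 ((finRotate (n + 2))⁻¹ 1) ∈ H := fun r hr => by
    have : (finRotate (n + 2))⁻¹ 1 = 0 := by
      rw [Equiv.Perm.inv_eq_iff_eq, finRotate_apply, zero_add]
    rw [this, Equiv.swap_comm]
    exact hR.2.2.1 _ hr
  -- A full cycle and an adjacent transposition generate the symmetric group, and in a finite
  -- group the submonoid they generate is the same.
  have hπ : π ∈ (⊤ : Subgroup _) := Subgroup.mem_top π
  rw [← Equiv.Perm.closure_cycle_adjacent_swap isCycle_finRotate.inv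
    (by rw [Equiv.Perm.support_inv, support_finRotate]) 1, ← Subgroup.mem_toSubmonoid,
    Subgroup.closure_toSubmonoid_of_finite] at hπ
  refine Submonoid.closure_le.mpr ?_ hπ
  rintro _ (rfl | rfl)
  exacts [hcyc, hswap]

theorem eq_zero_one_mem (hR : IsSRelClone R) (n : ℕ) :
    ⟨n + 1, fun _ => {c | c 0 = c 1}⟩ ∈ R := by
  induction n with
  | zero => exact hR.1
  | succ n ih =>
    simpa only [Set.preimage_ofPred_eq, Fin.init, Fin.castSucc_zero, Fin.castSucc_one]
      using hR.init_mem ih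

theorem eq_mem (hR : IsSRelClone R) {n : ℕ} {i j : Fin (n + 1)} (hij : i ≠ j) :
    ⟨n, fun _ => {c | c i = c j}⟩ ∈ R := by
  rcases n with _ | n
  · exact absurd (Subsingleton.elim (α := Fin 1) i j) hij
  set j' := Equiv.swap 0 i j
  have hj' : j' ≠ 0 := by simpa [j', Equiv.swap_apply_eq_iff] using hij.symm
  have h0 : (Equiv.swap 0 i * Equiv.swap 1 j') 0 = i := by
    simp [Equiv.swap_apply_of_ne_of_ne (Fin.zero_ne_one) hj'.symm]
  have h1 : (Equiv.swap 0 i * Equiv.swap 1 j') 1 = j := by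
    simp [j']
  simpa only [Set.preimage_ofPred_eq, Function.comp, h0, h1]
    using hR.comap_perm_mem (Equiv.swap 0 i * Equiv.swap 1 j') (hR.eq_zero_one_mem n)

-- The arity is given through `h` so that no cast between `Fin` types is needed.
theorem drop_mem (hR : IsSRelClone R) {n M t : ℕ} (h : n = M + t)
    {q : S → Set (Fin (n + 1) → A)} (hq : ⟨n, q⟩ ∈ R) :
    ⟨M, fun s => (fun c j => c ⟨t + j, by have := j.isLt; omega⟩) '' q s⟩ ∈ R := by
  subst h
  induction t with
  | zero => simpa using hq
  | succ t ih =>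
    convert ih (hR.tail_mem hq) using 3 with s
    rw [Set.image_image]
    congr! 3 with c j
    exact congrArg c (Fin.ext (by simp only [Fin.succ_mk]; omega))

theorem exists_apply_eq_apply_mem (hR : IsSRelClone R) {m M : ℕ} {ι : Type*} [Finite ι]
    (f : ι → Fin (m + 1)) (g : ι → Fin (M + 1)) {r : S → Set (Fin (m + 1) → A)}
    (hr : ⟨m, r⟩ ∈ R) :
    ⟨M, fun s => {b | ∃ a ∈ r s, ∀ i, a (f i) = b (g i)}⟩ ∈ R := by
  have hprod : (⟨m + M + 1, fun s => {c | (fun i : Fin (m + 1) => c ⟨i, by omega⟩) ∈ r s ∧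
      (fun j : Fin (M + 1) => c ⟨m + 1 + j, by omega⟩) ∈ Set.univ}⟩ : SRel S A) ∈ R :=
    hR.2.2.2.2.1 _ hr _ (hR.univ_mem M)
  have heq : ∀ i, (⟨m + M + 1, fun _ => {c | c ⟨f i, by omega⟩ = c ⟨m + 1 + g i, by omega⟩}⟩ :
      SRel S A) ∈ R := fun i => hR.eq_mem (by simp only [ne_eq, Fin.ext_iff]; omega)
  convert hR.drop_mem (n := m + M + 1) (M := M) (t := m + 1) (by omega)
    (hR.inter_mem hprod (hR.iInter_mem heq)) using 3 with s
  ext b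
  constructor
  · rintro ⟨a, ha, hab⟩
    obtain ⟨c, rfl, rfl⟩ := Fin.exists_append_eq a b
    exact ⟨c, ⟨⟨ha, trivial⟩, Set.mem_iInter.mpr hab⟩, rfl⟩
  · rintro ⟨c, ⟨⟨hc, -⟩, hceq⟩, rfl⟩
    exact ⟨_, hc, Set.mem_iInter.mp hceq⟩

theorem comap_mem (hR : IsSRelClone R) {m M : ℕ} (h : Fin (m + 1) → Fin (M + 1))
    {r : S → Set (Fin (m + 1) → A)} (hr : ⟨m, r⟩ ∈ R) :
    ⟨M, fun s => (· ∘ h) ⁻¹' r s⟩ ∈ R := by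
  convert hR.exists_apply_eq_apply_mem id h hr using 3 with s
  ext b
  refine ⟨fun hb => ⟨_, hb, fun _ => rfl⟩, fun ⟨_, ha, hab⟩ => ?_⟩
  rwa [Set.mem_preimage, ← show _ = b ∘ h from funext hab]

theorem map_mem (hR : IsSRelClone R) {m t : ℕ} (g : Fin (t + 1) → Fin (m + 1))
    {r : S → Set (Fin (m + 1) → A)} (hr : ⟨m, r⟩ ∈ R) :
    ⟨t, fun s => (· ∘ g) '' r s⟩ ∈ R := by
  convert hR.exists_apply_eq_apply_mem g id hr using 3 with s
  ext b
  exact exists_congr fun a => and_congr_right fun _ => funext_iff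

theorem const_mem_of_UPol_trivial [Finite A] (hR : IsSRelClone R)
    (hproj : ∀ f ∈ UPol {σ : URel A | ⟨σ.m, fun _ => σ.rel⟩ ∈ R}, ∃ i, ∀ x, f.fn x = x i)
    {m : ℕ} (σ : Set (Fin (m + 1) → A)) : ⟨m, fun _ => σ⟩ ∈ R := by
  rcases σ.eq_empty_or_nonempty with rfl | ⟨a₀, ha₀⟩
  · exact hR.empty_mem m
  have : Nonempty σ := ⟨⟨a₀, ha₀⟩⟩
  have : Nonempty A := ⟨a₀ 0⟩
  obtain ⟨n, ⟨enum⟩⟩ := Finite.exists_equiv_fin_succ σ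
  obtain ⟨N, ⟨eF⟩⟩ := Finite.exists_equiv_fin_succ (Fin (n + 1) → A)
  -- `⋂ G` is the least constant relation of `R` containing the columns `col l`; each of its
  -- members, read through `eF` as an operation, preserves all constant relations of `R`, so it
  -- is a projection, i.e. a column.
  let col : Fin (n + 1) → Fin (N + 1) → A := fun l v => eF.symm v l
  let G := {g : Set (Fin (N + 1) → A) | ⟨N, fun _ => g⟩ ∈ R ∧ ∀ l, col l ∈ g}
  have hΓ : ⟨N, fun _ => ⋂ g : G, g.1⟩ ∈ R := hR.iInter_mem fun g => g.2.1
  have hcol : ∀ l, col l ∈ ⋂ g : G, g.1 := fun l => Set.mem_iInter.mpr fun g => g.2.2 l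
  have hΓcol : ∀ a ∈ ⋂ g : G, g.1, ∃ l, a = col l := by
    intro a ha
    obtain ⟨l, hl⟩ := hproj ⟨n, a ∘ eF⟩ fun θ hθ r hr => by
      let h : Fin (θ.m + 1) → Fin (N + 1) := fun j => eF fun i => r i j
      have hG : (· ∘ h) ⁻¹' θ.rel ∈ G :=
        ⟨hR.comap_mem h hθ, fun l => by simpa [col, h, Function.comp_def] using hr l⟩
      exact Set.mem_iInter.mp ha ⟨_, hG⟩
    exact ⟨l, funext fun v => by simpa [col] using hl (eF.symm v)⟩
  convert hR.map_mem (fun j => eF fun l => (enum.symm l).1 j) hΓ using 3 with s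
  ext x
  constructor
  · intro hx
    obtain ⟨l, hl⟩ := enum.symm.surjective ⟨x, hx⟩
    exact ⟨col l, hcol l, by simp [col, Function.comp_def, hl]⟩
  · rintro ⟨a, ha, rfl⟩
    obtain ⟨l, rfl⟩ := hΓcol a ha
    simp [col, Function.comp_def]

theorem mem_of_const_mem [Finite S] [Nontrivial A] (hR : IsSRelClone R)
    (hε : ⟨1, fun s => {a | s = 1 → a 0 = a 1}⟩ ∈ R)
    (hconst : ∀ (m : ℕ) (σ : Set (Fin (m + 1) → A)), ⟨m, fun _ => σ⟩ ∈ R) (ρ : SRel S A) :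
    ρ ∈ R := by
  obtain ⟨m, r⟩ := ρ
  have hpiece : ∀ v : S, ⟨m, fun s => {x | s = v → x ∈ r v}⟩ ∈ R := by
    intro v
    have hχ : (⟨1, fun s => {a : Fin 2 → A | s = v → a 0 = a 1}⟩ : SRel S A) ∈ R := by
      have h : (⟨1, fun s => {a : Fin 2 → A | ∀ s', s' * v = s → s' = 1 → a 0 = a 1}⟩ :
        SRel S A) ∈ R := hR.2.2.2.2.2.2.2 v _ hε
      convert h using 3 with s
      ext a
      constructor
      · rintro h s' rfl rfl
        exact h (one_mul v)
      · rintro h rfl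
        exact h 1 (one_mul s) rfl
    -- `x` is in the piece at `s` iff some `c₀, c₁` satisfy `s = v → c₀ = c₁` and
    -- `c₀ = c₁ → x ∈ r v`; for `s ≠ v` any `c₀ ≠ c₁` will do.
    have h := hR.map_mem (fun j => j.succ.succ) (hR.inter_mem (hR.comap_mem ![0, 1] hχ)
      (hconst (m + 2) {c | c 0 = c 1 → (fun j => c j.succ.succ) ∈ r v}))
    convert h using 3 with s
    ext x
    constructor
    · intro hx
      obtain ⟨a₀, a₁, hne⟩ := exists_pair_ne A
      by_cases hs : s = v
      · exact ⟨Fin.cons a₀ (Fin.cons a₀ x), ⟨fun _ => rfl, fun _ => hx hs⟩, rfl⟩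
      · exact ⟨Fin.cons a₀ (Fin.cons a₁ x), ⟨fun h => absurd h hs, fun h => absurd h hne⟩, rfl⟩
    · rintro ⟨c, ⟨hc01, hc⟩, rfl⟩ hs
      exact hc (hc01 hs)
  convert hR.iInter_mem hpiece using 3 with s
  ext x
  simp

end IsSRelClone

section Projection

variable {ι A : Type*}

open Classical in
noncomputable def twoValued (T : Set ι) (a b : A) : ι → A := fun i => if i ∈ T then b else a

@[simp] theorem twoValued_of_mem {T : Set ι} {a b : A} {i : ι} (h : i ∈ T) :
    twoValued T a b i = b := if_pos h

@[simp] theorem twoValued_of_notMem {T : Set ι} {a b : A} {i : ι} (h : i ∉ T) :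
    twoValued T a b i = a := if_neg h

theorem twoValued_self (T : Set ι) (a : A) : twoValued T a a = fun _ => a :=
  funext fun i => by by_cases h : i ∈ T <;> simp [h]

theorem twoValued_ne_twoValued_compl {T : Set ι} {a b c d : A} (hbc : b ≠ c) (had : a ≠ d)
    (i : ι) : twoValued T a b i ≠ twoValued Tᶜ c d i := by
  by_cases h : i ∈ T <;> simp [h, hbc, had]

variable [LinearOrder A]

def PreservesLeNe (f : (ι → A) → A) : Prop :=
  Monotone f ∧ ∀ x y, (∀ i, x i ≠ y i) → f x ≠ f y

def decisive (f : (ι → A) → A) (a b : A) : Set (Set ι) := {T | f (twoValued T a b) = b}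

namespace PreservesLeNe

variable [Finite A] {f : (ι → A) → A}

theorem apply_const (hf : PreservesLeNe f) (c : A) : f (fun _ => c) = c := by
  have hg : StrictMono fun c : A => f fun _ => c := fun a b hab =>
    (hf.1 fun _ => hab.le).lt_of_ne (hf.2 _ _ fun _ => hab.ne)
  exact le_antisymm hg.apply_le hg.le_apply

theorem exists_apply_eq (hf : PreservesLeNe f) (x : ι → A) : ∃ i, f x = x i := by
  by_contra! h
  exact hf.2 x (fun _ => f x) (fun i => (h i).symm) (hf.apply_const (f x)).symm

theorem apply_twoValued_eq_or (hf : PreservesLeNe f) (T : Set ι) (a b : A) :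
    f (twoValued T a b) = a ∨ f (twoValued T a b) = b := by
  obtain ⟨i, hi⟩ := hf.exists_apply_eq (twoValued T a b)
  by_cases hiT : i ∈ T
  · exact .inr (by simpa [hiT] using hi)
  · exact .inl (by simpa [hiT] using hi)

theorem notMem_decisive_iff (hf : PreservesLeNe f) {T : Set ι} {a b : A}
    (hab : a ≠ b) : T ∉ decisive f a b ↔ f (twoValued T a b) = a :=
  ⟨(hf.apply_twoValued_eq_or T a b).resolve_right, fun h hT => hab (h.symm.trans hT)⟩

theorem compl_mem_decisive_iff (hf : PreservesLeNe f) {T : Set ι} {a b : A}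
    (hab : a ≠ b) : Tᶜ ∈ decisive f a b ↔ T ∉ decisive f a b := by
  have h := hf.2 _ _ (twoValued_ne_twoValued_compl (T := T) hab.symm hab)
  rw [hf.notMem_decisive_iff hab]
  constructor
  · intro hc
    exact (hf.notMem_decisive_iff hab).mp fun hT => h (hT.trans hc.symm)
  · intro hT
    exact (hf.apply_twoValued_eq_or Tᶜ a b).resolve_left fun hc => h (hT.trans hc.symm)

theorem mem_decisive_of_le (hf : PreservesLeNe f) {T : Set ι} {a b : A} {x : ι → A}
    (hx : a < f x) (hle : x ≤ twoValued T a b) : T ∈ decisive f a b :=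
  (hf.apply_twoValued_eq_or T a b).resolve_left fun h => (hx.trans_le (hf.1 hle)).ne' h

theorem decisive_mono (hf : PreservesLeNe f) {T T' : Set ι} {a b : A} (hab : a < b)
    (hT : T ∈ decisive f a b) (hTT' : T ⊆ T') : T' ∈ decisive f a b := by
  refine hf.mem_decisive_of_le (hT.symm ▸ hab) fun i => ?_
  by_cases hi : i ∈ T
  · simp [hi, hTT' hi]
  · by_cases hi' : i ∈ T' <;> simp [hi, hi', hab.le]

theorem decisive_eq_of_subset (hf : PreservesLeNe f) {a b c d : A} (hab : a ≠ b)
    (hcd : c ≠ d) (h : decisive f a b ⊆ decisive f c d) : decisive f a b = decisive f c d := by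
  refine h.antisymm fun T hT => ?_
  by_contra hT'
  rw [← hf.compl_mem_decisive_iff hab] at hT'
  exact (hf.compl_mem_decisive_iff hcd).mp (h hT') hT

theorem decisive_eq_of_lt_of_lt (hf : PreservesLeNe f) {a m b : A} (ham : a < m)
    (hmb : m < b) : decisive f a m = decisive f a b ∧ decisive f m b = decisive f a b := by
  refine ⟨hf.decisive_eq_of_subset ham.ne (ham.trans hmb).ne fun T hT => ?_,
    (hf.decisive_eq_of_subset (ham.trans hmb).ne hmb.ne fun T hT => ?_).symm⟩
  · refine hf.mem_decisive_of_le (hT.symm ▸ ham) fun i => ?_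
    by_cases hi : i ∈ T <;> simp [hi, hmb.le]
  · rw [← compl_compl T, hf.compl_mem_decisive_iff hmb.ne]
    exact fun hc => hf.2 _ _ (twoValued_ne_twoValued_compl hmb.ne' (ham.trans hmb).ne)
      (hT.trans hc.symm)

theorem decisive_eq_bot_top [BoundedOrder A] (hf : PreservesLeNe f) {a b : A}
    (hab : a < b) : decisive f a b = decisive f ⊥ ⊤ := by
  have hb : decisive f ⊥ b = decisive f ⊥ ⊤ := by
    rcases eq_top_or_lt_top b with rfl | hb
    · rfl
    · exact (hf.decisive_eq_of_lt_of_lt (bot_le.trans_lt hab) hb).1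
  rcases eq_bot_or_bot_lt a with rfl | ha
  · exact hb
  · exact (hf.decisive_eq_of_lt_of_lt ha hab).2.trans hb

theorem inter_mem_decisive [BoundedOrder A] (hf : PreservesLeNe f) {a m b : A}
    (ham : a < m) (hmb : m < b) {T₁ T₂ : Set ι} (h₁ : T₁ ∈ decisive f ⊥ ⊤)
    (h₂ : T₂ ∈ decisive f ⊥ ⊤) : T₁ ∩ T₂ ∈ decisive f ⊥ ⊤ := by
  classical
  have hbt : (⊥ : A) < ⊤ := (bot_le.trans_lt (ham.trans hmb)).trans_le le_top
  have ham' := hf.decisive_eq_bot_top ham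
  have hmb' := hf.decisive_eq_bot_top hmb
  by_contra h
  have hdiff : T₁ \ T₂ ∉ decisive f m b := by
    rw [hmb']
    exact fun hd => (hf.compl_mem_decisive_iff hbt.ne).mp
      (hf.decisive_mono hbt hd fun i hi => hi.2) h₂
  have hdiffc : (T₁ \ T₂)ᶜ ∈ decisive f a m := by
    rwa [ham', hf.compl_mem_decisive_iff hbt.ne, ← hmb']
  -- `x` and `z` differ in every argument, yet monotonicity squeezes both `f x` and `f z` to `m`.
  let x : ι → A := fun i => if i ∈ T₁ then if i ∈ T₂ then m else b else a
  let z : ι → A := fun i => if i ∈ T₁ then if i ∈ T₂ then b else a else m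
  have hx : f x = m := by
    refine le_antisymm ?_ ?_
    · calc f x ≤ f (twoValued (T₁ \ T₂) m b) := hf.1 fun i => by
            by_cases hi₁ : i ∈ T₁ <;> by_cases hi₂ : i ∈ T₂ <;> simp [x, hi₁, hi₂, ham.le]
        _ = m := (hf.notMem_decisive_iff hmb.ne).mp hdiff
    · calc m = f (twoValued T₁ a m) := (ham' ▸ h₁ : T₁ ∈ decisive f a m).symm
        _ ≤ f x := hf.1 fun i => by
            by_cases hi₁ : i ∈ T₁ <;> by_cases hi₂ : i ∈ T₂ <;> simp [x, hi₁, hi₂, hmb.le]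
  have hz : f z = m := by
    refine le_antisymm ?_ ?_
    · calc f z ≤ f (twoValued (T₁ ∩ T₂) m b) := hf.1 fun i => by
            by_cases hi₁ : i ∈ T₁ <;> by_cases hi₂ : i ∈ T₂ <;> simp [z, hi₁, hi₂, ham.le]
        _ = m := (hf.notMem_decisive_iff hmb.ne).mp (hmb' ▸ h)
    · calc m = f (twoValued (T₁ \ T₂)ᶜ a m) := hdiffc.symm
        _ ≤ f z := hf.1 fun i => by
            by_cases hi₁ : i ∈ T₁ <;> by_cases hi₂ : i ∈ T₂ <;> simp [z, hi₁, hi₂, hmb.le]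
  refine hf.2 x z (fun i => ?_) (hx.trans hz.symm)
  by_cases hi₁ : i ∈ T₁ <;> by_cases hi₂ : i ∈ T₂ <;>
    simp [x, z, hi₁, hi₂, ham.ne, hmb.ne, (ham.trans hmb).ne']

theorem exists_decisive_eq [Finite ι] [BoundedOrder A] (hf : PreservesLeNe f)
    {a m b : A} (ham : a < m) (hmb : m < b) : ∃ i₀, ∀ T, T ∈ decisive f ⊥ ⊤ ↔ i₀ ∈ T := by
  have hbt : (⊥ : A) < ⊤ := (bot_le.trans_lt (ham.trans hmb)).trans_le le_top
  let F : Filter ι :=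
    { sets := decisive f ⊥ ⊤
      univ_sets := by
        show f _ = ⊤
        rw [show twoValued Set.univ ⊥ ⊤ = fun _ : ι => (⊤ : A) from
          funext fun i => twoValued_of_mem (Set.mem_univ i)]
        exact hf.apply_const ⊤
      sets_of_superset := fun hT hTT' => hf.decisive_mono hbt hT hTT'
      inter_sets := hf.inter_mem_decisive ham hmb }
  obtain ⟨i₀, hi₀⟩ := (Ultrafilter.ofComplNotMemIff F fun T =>
    (hf.compl_mem_decisive_iff hbt.ne).not_left).eq_pure_of_finite
  exact ⟨i₀, fun T => Ultrafilter.ext_iff.mp hi₀ T⟩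

theorem exists_eq_apply [Finite ι] [BoundedOrder A] (hf : PreservesLeNe f)
    {a m b : A} (ham : a < m) (hmb : m < b) : ∃ i₀, ∀ x, f x = x i₀ := by
  obtain ⟨i₀, hi₀⟩ := hf.exists_decisive_eq ham hmb
  have htwo : ∀ T {c d : A}, c ≤ d → f (twoValued T c d) = twoValued T c d i₀ := by
    intro T c d hcd
    rcases hcd.eq_or_lt with rfl | hcd
    · simp [twoValued_self, hf.apply_const]
    have hTd : T ∈ decisive f c d ↔ i₀ ∈ T := hf.decisive_eq_bot_top hcd ▸ hi₀ T
    by_cases hT : i₀ ∈ T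
    · rw [twoValued_of_mem hT]
      exact hTd.mpr hT
    · rw [twoValued_of_notMem hT]
      exact (hf.notMem_decisive_iff hcd.ne).mp (mt hTd.mp hT)
  refine ⟨i₀, fun x => le_antisymm ?_ ?_⟩
  · calc f x ≤ f (twoValued {i | x i₀ < x i} (x i₀) ⊤) := hf.1 fun i => by
          by_cases hi : x i₀ < x i <;> simp [hi, not_lt.mp]
      _ = x i₀ := by simp [htwo _ le_top]
  · calc x i₀ = f (twoValued {i | x i₀ ≤ x i} ⊥ (x i₀)) := by simp [htwo _ bot_le]
      _ ≤ f x := hf.1 fun i => by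
          by_cases hi : x i₀ ≤ x i <;> simp [hi]

end PreservesLeNe

end Projection

theorem uPreserves_binary_iff {A : Type*} (f : UOp A) (r : A → A → Prop) :
    UPreserves f ⟨1, {a | r (a 0) (a 1)}⟩ ↔
      ∀ x y, (∀ i, r (x i) (y i)) → r (f.fn x) (f.fn y) :=
  ⟨fun hf x y hxy => hf (fun i => ![x i, y i]) hxy, fun hf _ hp => hf _ _ hp⟩

/-- The full `S`-relational clone on `A = {0,…,k−1}` (`k ≥ 3`) is finitely generated
by the three binary `S`-relations `(Δ_A, ∇_A, …, ∇_A)`, `(≤, ≤, …, ≤)` and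
`(≠, ≠, …, ≠)` (first component for the signum `e`, the other components for all
`s ≠ e`). -/
theorem SRel_finitely_generated {S : Type*} [Monoid S] [Fintype S] (k : ℕ) :
    SRg ({ ⟨1, fun s => { a | s = 1 → a 0 = a 1 }⟩,
           ⟨1, fun _ => { a | a 0 ≤ a 1 }⟩,
           ⟨1, fun _ => { a | a 0 ≠ a 1 }⟩ } : Set (SRel S (Fin (k + 3)))) =
      (Set.univ : Set (SRel S (Fin (k + 3)))) := by
  refine Set.eq_univ_of_forall fun ρ R ⟨hR, hgen⟩ => ?_
  have hle := hgen (Set.mem_insert_of_mem _ (Set.mem_insert _ _))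
  have hne := hgen (Set.mem_insert_of_mem _ (Set.mem_insert_of_mem _ rfl))
  refine hR.mem_of_const_mem (hgen (Set.mem_insert _ _)) (fun m σ => ?_) ρ
  refine hR.const_mem_of_UPol_trivial (fun f hf => ?_) σ
  have hf' : PreservesLeNe f.fn :=
    ⟨(uPreserves_binary_iff f _).mp (hf _ hle), (uPreserves_binary_iff f _).mp (hf _ hne)⟩
  exact hf'.exists_eq_apply (a := ⟨0, by omega⟩) (m := ⟨1, by omega⟩) (b := ⟨2, by omega⟩)
    (Fin.mk_lt_mk.mpr (by omega)) (Fin.mk_lt_mk.mpr (by omega))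

end SPreclone
end

section
/- Let S be a finite monoid and A a finite set with at least two elements. There are only finitely many maximal S-preclones on A (S-preclones maximal among those properly contained in SOp(A)) and only finitely many minimal S-preclones on A (S-preclones minimal among those properly containing SJ_A). -/
namespace SPreclone

/-!
Both halves reduce to showing that an extremal `S`-preclone is determined by its members of
bounded arity, of which there are only finitely many.

A minimal `S`-preclone is generated by any of its nontrivial members. Merging two arguments with
equal signa is a preclone operation, so in a nontrivial member of least arity every such merger
is a trivial projection. Once the arity reaches `|S| · max (|A| + 1) 8`, some signum class has
`max (|A| + 1) 8` arguments, and Świerczkowski's lemma makes the member itself trivial.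

A proper `S`-preclone `F` misses an operation `g` of arity at most `|A| + 1`, because every
operation is a superposition of operations of that arity. The least `F`-invariant `S`-relation
`Γ_F(χ^λ)` for `λ = sgn g` has `|A| ^ (arity g)` rows and is not preserved by `g`, so a maximal `F`
is the set of `S`-polymorphisms of its invariant relations with at most `|A| ^ (|A| + 1)` rows.
Whether `F` preserves a relation with `m` rows is decided by its members of arity below
`|S| · |A| ^ m`, since longer members merge two arguments with equal signa and equal columns.
-/

namespace SOp

variable {S A : Type*}

def minor (T : SOp S A) {m : ℕ} (φ : Fin (T.n + 1) → Fin (m + 1)) (μ : Fin (m + 1) → S) :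
    SOp S A :=
  ⟨m, fun z => T.fn (z ∘ φ), μ⟩

end SOp

section Minors

variable {S A : Type*} [Monoid S] {F : Set (SOp S A)}

lemma IsSPreclone.minor_perm_mem (hF : IsSPreclone F) {T : SOp S A} (hT : T ∈ F)
    (σ : Equiv.Perm (Fin (T.n + 1))) : T.minor σ (T.sgn ∘ σ.symm) ∈ F := by
  obtain ⟨n, fn, sg⟩ := T
  change Equiv.Perm (Fin (n + 1)) at σ
  have hσ : σ ∈ Submonoid.closure {finRotate (n + 1), Equiv.swap 0 1} := by
    rcases n with _ | k
    · rw [show σ = 1 from Equiv.ext fun _ => Subsingleton.elim (α := Fin 1) _ _]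
      exact Submonoid.one_mem _
    · have h01 : finRotate (k + 2) 0 = 1 := by simp [finRotate_apply]
      rw [← Subgroup.closure_toSubmonoid_of_finite, ← h01,
        Equiv.Perm.closure_cycle_adjacent_swap isCycle_finRotate support_finRotate]
      trivial
  induction hσ using Submonoid.closure_induction generalizing fn sg with
  | mem τ hτ =>
    rcases hτ with rfl | rfl
    · convert hF.2.1 _ hT using 1
      simp only [SOp.minor, cycOp, SOp.mk.injEq, heq_eq_eq, true_and]
      constructor
      · funext z
        exact congrArg fn (funext fun j => congrArg z (finRotate_apply j))
      · funext j
        exact congrArg sg ((Equiv.symm_apply_eq _).2 (by simp [finRotate_apply]))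
    · exact hF.2.2.1 _ hT
  | one => exact hT
  | mul τ υ _ _ hτ hυ => exact hτ _ _ (hυ fn sg hT)

lemma _root_.Fin.exists_perm_apply_zero_apply_one {n : ℕ} {i i' : Fin (n + 2)} (h : i ≠ i') :
    ∃ σ : Equiv.Perm (Fin (n + 2)), σ 0 = i ∧ σ 1 = i' := by
  set τ := Equiv.swap 0 i
  have hτ : τ i' ≠ 0 := fun h0 => h (by
    rw [Equiv.swap_apply_eq_iff, Equiv.swap_apply_left] at h0
    exact h0.symm)
  refine ⟨τ * Equiv.swap 1 (τ i'), ?_, ?_⟩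
  · rw [Equiv.Perm.mul_apply, Equiv.swap_apply_of_ne_of_ne (by simp) hτ.symm]
    exact Equiv.swap_apply_left 0 i
  · rw [Equiv.Perm.mul_apply, Equiv.swap_apply_left, Equiv.swap_apply_self]

lemma IsSPreclone.exists_merge (hF : IsSPreclone F) {T : SOp S A} (hT : T ∈ F)
    {i i' : Fin (T.n + 1)} (hne : i ≠ i') (hsg : T.sgn i = T.sgn i') :
    ∃ g ∈ F, g.n < T.n ∧ ∃ ψ : Fin (g.n + 1) → Fin (T.n + 1),
      (∀ x, x i = x i' → T.fn x = g.fn (x ∘ ψ)) ∧ ∀ w, g.sgn w = T.sgn (ψ w) := by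
  obtain ⟨_ | k, fn, sg⟩ := T
  · exact absurd (Subsingleton.elim (α := Fin 1) i i') hne
  obtain ⟨σ, hσ0, hσ1⟩ := Fin.exists_perm_apply_zero_apply_one hne
  have hΔ := hF.2.2.2.2.1 _ (hF.minor_perm_mem hT σ.symm)
  simp only [SOp.minor, deltaOp, Equiv.symm_symm] at hΔ
  have hsg' : (sg ∘ σ) 0 = (sg ∘ σ) 1 := by
    simp only [Function.comp_apply, hσ0, hσ1]
    exact hsg
  rw [if_pos hsg'] at hΔ
  refine ⟨_, hΔ, Nat.lt_succ_self k, fun w => σ w.succ, fun x hx => ?_, fun w => rfl⟩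
  refine congrArg fn (funext fun v => ?_)
  rcases Fin.eq_zero_or_eq_succ (σ.symm v) with h0 | ⟨j, hj⟩
  · have hv : v = i := by rw [← hσ0, ← h0, Equiv.apply_symm_apply]
    subst hv
    rw [hx, ← hσ1]
    congr 2
    ext
    simp [h0]
  · conv_lhs => rw [← σ.apply_symm_apply v]
    congr 2
    ext
    simp [hj]

lemma IsSPreclone.minor_mem_of_injective (hF : IsSPreclone F) {T : SOp S A} (hT : T ∈ F)
    {m : ℕ} {φ : Fin (T.n + 1) → Fin (m + 1)} (hφ : Function.Injective φ) {μ : Fin (m + 1) → S}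
    (hμ : ∀ v, T.sgn v = μ (φ v)) : T.minor φ μ ∈ F := by
  obtain ⟨k, hk⟩ : ∃ k, m = T.n + k :=
    ⟨m - T.n, by
      have := Fintype.card_le_of_injective φ hφ
      simp only [Fintype.card_fin, add_le_add_iff_right] at this
      omega⟩
  induction k generalizing T with
  | zero =>
    subst hk
    have hbij : Function.Bijective φ := hφ.bijective_of_finite
    let σ : Equiv.Perm (Fin (T.n + 1)) := Equiv.ofBijective φ hbij
    have hμσ : μ = T.sgn ∘ σ.symm := funext fun j => by
      rw [Function.comp_apply, hμ]
      exact congrArg μ (Equiv.ofBijective_apply_symm_apply φ hbij j).symm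
    rw [hμσ]
    exact hF.minor_perm_mem hT σ
  | succ k ih =>
    obtain ⟨p, hp⟩ : ∃ p, p ∉ Set.range φ := by
      by_contra! h
      have := Fintype.card_le_of_surjective φ fun p => h p
      simp only [Fintype.card_fin, add_le_add_iff_right] at this
      omega
    refine ih (hF.2.2.2.1 (μ p) T hT) (Fin.cons_injective_iff.2 ⟨hp, hφ⟩) ?_
      (by simp only [hk, nablaOp]; omega)
    intro v
    cases v using Fin.cases with
    | zero => rfl
    | succ v => exact hμ v

lemma IsSPreclone.minor_mem (hF : IsSPreclone F) {T : SOp S A} (hT : T ∈ F) {m : ℕ}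
    (φ : Fin (T.n + 1) → Fin (m + 1)) {μ : Fin (m + 1) → S} (hμ : ∀ v, T.sgn v = μ (φ v)) :
    T.minor φ μ ∈ F := by
  induction h : T.n using Nat.strong_induction_on generalizing T with
  | _ N IH =>
  by_cases hφ : Function.Injective φ
  · exact hF.minor_mem_of_injective hT hφ hμ
  obtain ⟨a, b, hab, hne⟩ := Function.not_injective_iff.1 hφ
  obtain ⟨g, hg, hgn, ψ, hfn, hsgn⟩ := hF.exists_merge hT hne (by rw [hμ, hμ, hab])
  have hTg : T.minor φ μ = g.minor (φ ∘ ψ) μ := by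
    simp only [SOp.minor, SOp.mk.injEq, heq_eq_eq, and_true, true_and]
    exact funext fun z => hfn (z ∘ φ) (congrArg z hab)
  rw [hTg]
  exact IH g.n (h ▸ hgn) hg (φ ∘ ψ) (fun w => (hsgn w).trans (hμ _)) rfl

lemma IsSPreclone.SJ_subset (hF : IsSPreclone F) : SJ S A ⊆ F := by
  rintro f ⟨i, hi, hfi⟩
  convert hF.minor_mem hF.1 (fun _ => i) (μ := f.sgn) (fun _ => hi.symm) using 1
  obtain ⟨n, fn, sg⟩ := f
  simp only [SOp.minor, SOp.mk.injEq, heq_eq_eq, and_true, true_and]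
  exact funext hfi

end Minors

section Superposition

variable {S A : Type*} [Monoid S] {F : Set (SOp S A)}

/-- The variables of `compOp f g` are those of `g` followed by the last `f.n` ones of `f`. -/
def compOpEquiv (f g : SOp S A) : Fin ((compOp f g).n + 1) ≃ Fin (g.n + 1) ⊕ Fin f.n :=
  (finCongr (by simp only [compOp]; omega)).trans finSumFinEquiv.symm

lemma compOpEquiv_apply_lt (f g : SOp S A) (i : ℕ) (hi : i < g.n + 1) :
    compOpEquiv f g ⟨i, by simp only [compOp]; omega⟩ = Sum.inl ⟨i, hi⟩ := by
  rw [compOpEquiv, Equiv.trans_apply, ← finSumFinEquiv_symm_apply_castAdd]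
  rfl

lemma compOpEquiv_apply_add (f g : SOp S A) (j : Fin f.n) :
    compOpEquiv f g ⟨g.n + 1 + j, by simp only [compOp]; omega⟩ = Sum.inr j := by
  rw [compOpEquiv, Equiv.trans_apply, ← finSumFinEquiv_symm_apply_natAdd]
  rfl

lemma compOp_fn_comp (f g : SOp S A) (x : Fin (g.n + 1) ⊕ Fin f.n → A) :
    (compOp f g).fn (x ∘ compOpEquiv f g) = f.fn (Fin.cons (g.fn (x ∘ Sum.inl)) (x ∘ Sum.inr)) := by
  refine congrArg f.fn (funext fun k => ?_)
  cases k using Fin.cases with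
  | zero => exact congrArg g.fn (funext fun i => congrArg x (compOpEquiv_apply_lt f g i i.2))
  | succ j => exact congrArg x (compOpEquiv_apply_add f g j)

lemma compOp_sgn (f g : SOp S A) (v : Fin ((compOp f g).n + 1)) :
    (compOp f g).sgn v =
      Sum.elim (fun j => g.sgn j * f.sgn 0) (f.sgn ∘ Fin.succ) (compOpEquiv f g v) := by
  obtain ⟨v, hv⟩ := v
  by_cases h : v < g.n + 1
  · rw [compOpEquiv_apply_lt f g v h]
    exact dif_pos h
  · obtain ⟨j, rfl⟩ : ∃ j, v = g.n + 1 + j := ⟨v - (g.n + 1), by omega⟩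
    rw [compOpEquiv_apply_add f g ⟨j, by simp only [compOp] at hv; omega⟩]
    refine (dif_neg h).trans (congrArg f.sgn (Fin.ext ?_))
    simp only [Fin.val_succ]
    omega

lemma _root_.Fin.insertNth_eq_cons_comp_cycleRange {n : ℕ} {α : Type*} (p : Fin (n + 1)) (a : α)
    (y : Fin n → α) : p.insertNth a y = Fin.cons a y ∘ p.cycleRange := by
  funext v
  rcases eq_or_ne v p with rfl | h
  · simp
  · obtain ⟨j, rfl⟩ := Fin.exists_succAbove_eq h
    simp

lemma IsSPreclone.exists_subst (hF : IsSPreclone F) {U G : SOp S A} (hU : U ∈ F) (hG : G ∈ F)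
    (v₀ : Fin (U.n + 1)) :
    ∃ C ∈ F, ∃ e : Fin (C.n + 1) ≃ Fin (G.n + 1) ⊕ Fin U.n,
      (∀ x, C.fn (x ∘ e) = U.fn (v₀.insertNth (G.fn (x ∘ Sum.inl)) (x ∘ Sum.inr))) ∧
      ∀ v, C.sgn v = Sum.elim (fun j => G.sgn j * U.sgn v₀) (U.sgn ∘ v₀.succAbove) (e v) := by
  set U' := U.minor v₀.cycleRange (U.sgn ∘ v₀.cycleRange.symm)
  refine ⟨compOp U' G, hF.2.2.2.2.2 _ (hF.minor_perm_mem hU _) G hG, compOpEquiv U' G,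
    fun x => ?_, fun v => ?_⟩
  · refine (compOp_fn_comp U' G x).trans ?_
    rw [Fin.insertNth_eq_cons_comp_cycleRange]
    rfl
  · rw [compOp_sgn]
    generalize compOpEquiv U' G v = p
    rcases p with j | j
    · exact congrArg (fun t => G.sgn j * U.sgn t) (Fin.cycleRange_symm_zero v₀)
    · exact congrArg U.sgn (Fin.cycleRange_symm_succ v₀ j)

/-- `U`, read through the variable map `w`, is `f` with the arguments `i ∈ P` replaced by `g i`
and every other argument `i` replaced by the variable `⟨i, 0⟩`. -/
def IsPartialSuperposition (f : SOp S A) (g : Fin (f.n + 1) → SOp S A)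
    (P : Finset (Fin (f.n + 1))) (U : SOp S A) (w : Fin (U.n + 1) → Σ i, Fin ((g i).n + 1)) :
    Prop :=
  Function.Injective w ∧ (∀ v i, i ∉ P → (w v).1 = i → w v = ⟨i, 0⟩) ∧
    (∀ i ∉ P, ⟨i, 0⟩ ∈ Set.range w) ∧
    (∀ z, U.fn (z ∘ w) =
      f.fn fun i => if i ∈ P then (g i).fn (fun j => z ⟨i, j⟩) else z ⟨i, 0⟩) ∧
    ∀ v, U.sgn v = if (w v).1 ∈ P then (g (w v).1).sgn (w v).2 * f.sgn (w v).1 else f.sgn (w v).1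

lemma isPartialSuperposition_empty (f : SOp S A) (g : Fin (f.n + 1) → SOp S A) :
    IsPartialSuperposition f g ∅ f fun i => ⟨i, 0⟩ := by
  refine ⟨fun i i' h => (Sigma.mk.inj h).1, ?_, fun i _ => ⟨i, rfl⟩, fun z => ?_, fun v => ?_⟩
  · rintro v i - rfl
    rfl
  · simp only [Finset.notMem_empty, if_false]
    rfl
  · simp only [Finset.notMem_empty, if_false]

lemma IsSPreclone.exists_isPartialSuperposition_insert (hF : IsSPreclone F) {f : SOp S A}
    {g : Fin (f.n + 1) → SOp S A} (hg : ∀ i, g i ∈ F) {P : Finset (Fin (f.n + 1))}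
    {k : Fin (f.n + 1)} (hk : k ∉ P) {U : SOp S A} (hU : U ∈ F)
    {w : Fin (U.n + 1) → Σ i, Fin ((g i).n + 1)} (hUw : IsPartialSuperposition f g P U w) :
    ∃ C ∈ F, ∃ w', IsPartialSuperposition f g (insert k P) C w' := by
  obtain ⟨hw, hw0, hwr, hfn, hsgn⟩ := hUw
  obtain ⟨v₀, hv₀⟩ := hwr k hk
  obtain ⟨C, hC, e, hCfn, hCsgn⟩ := hF.exists_subst hU (hg k) v₀
  have hne : ∀ j, (w (v₀.succAbove j)).1 ≠ k := fun j hj =>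
    Fin.succAbove_ne v₀ j (hw ((hw0 _ k hk hj).trans hv₀.symm))
  refine ⟨C, hC, Sum.elim (fun j => ⟨k, j⟩) (w ∘ v₀.succAbove) ∘ e, ?_, ?_, ?_, ?_, ?_⟩
  · refine (Function.Injective.sumElim sigma_mk_injective (hw.comp Fin.succAbove_right_injective)
      fun j j' h => hne j' (congrArg Sigma.fst h).symm).comp e.injective
  · intro v i hi
    simp only [Function.comp_apply]
    generalize e v = p
    rcases p with j | j
    · rintro rfl
      exact absurd (Finset.mem_insert_self _ P) hi
    · exact hw0 _ i (fun h => hi (Finset.mem_insert_of_mem h))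
  · intro i hi
    obtain ⟨u, hu⟩ := hwr i (fun h => hi (Finset.mem_insert_of_mem h))
    have hu₀ : u ≠ v₀ := by
      rintro rfl
      have hki : k = i := congrArg Sigma.fst (hv₀.symm.trans hu)
      exact hi (hki ▸ Finset.mem_insert_self k P)
    obtain ⟨j, rfl⟩ := Fin.exists_succAbove_eq hu₀
    exact ⟨e.symm (Sum.inr j), by simpa using hu⟩
  · intro z
    rw [← Function.comp_assoc, Sum.comp_elim, hCfn]
    refine (congrArg U.fn
      (Fin.insertNth_removeNth v₀ ((g k).fn fun j => z ⟨k, j⟩) (z ∘ w))).trans ?_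
    rw [← Function.update_comp_eq_of_injective z hw, hv₀, hfn]
    refine congrArg f.fn (funext fun i => ?_)
    by_cases hik : i = k
    · subst hik
      simp [hk]
    · simp [hik]
  · intro v
    rw [hCsgn, Function.comp_apply]
    generalize e v = p
    rcases p with j | j
    · simp [hsgn, hv₀, hk]
    · simp [hsgn, hne]

lemma IsSPreclone.exists_superpose (hF : IsSPreclone F) {f : SOp S A} (hf : f ∈ F)
    {g : Fin (f.n + 1) → SOp S A} (hg : ∀ i, g i ∈ F) :
    ∃ D ∈ F, ∃ w : Fin (D.n + 1) → (Σ i, Fin ((g i).n + 1)),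
      (∀ z, D.fn (z ∘ w) = f.fn fun i => (g i).fn fun j => z ⟨i, j⟩) ∧
      ∀ v, D.sgn v = (g (w v).1).sgn (w v).2 * f.sgn (w v).1 := by
  have h : ∀ P, ∃ U ∈ F, ∃ w, IsPartialSuperposition f g P U w := by
    intro P
    induction P using Finset.induction_on with
    | empty => exact ⟨f, hf, _, isPartialSuperposition_empty f g⟩
    | insert k P hk ih =>
      obtain ⟨U, hU, w, hUw⟩ := ih
      exact hF.exists_isPartialSuperposition_insert hg hk hU hUw
  obtain ⟨D, hD, w, -, -, -, hfn, hsgn⟩ := h Finset.univ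
  refine ⟨D, hD, w, fun z => ?_, fun v => ?_⟩
  · simpa only [Finset.mem_univ, if_true] using hfn z
  · simpa only [Finset.mem_univ, if_true] using hsgn v

lemma IsSPreclone.superpose_mem (hF : IsSPreclone F) {f : SOp S A} (hf : f ∈ F)
    {g : Fin (f.n + 1) → SOp S A} (hg : ∀ i, g i ∈ F) {m : ℕ}
    (vars : ∀ i, Fin ((g i).n + 1) → Fin (m + 1)) {μ : Fin (m + 1) → S}
    (hμ : ∀ i j, (g i).sgn j * f.sgn i = μ (vars i j)) :
    (⟨m, fun z => f.fn fun i => (g i).fn fun j => z (vars i j), μ⟩ : SOp S A) ∈ F := by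
  obtain ⟨D, hD, w, hfn, hsgn⟩ := hF.exists_superpose hf hg
  have hmem := hF.minor_mem hD (fun v => vars (w v).1 (w v).2) (fun v => (hsgn v).trans (hμ _ _))
  convert hmem using 1
  simp only [SOp.minor, SOp.mk.injEq, heq_eq_eq, true_and, and_true]
  exact funext fun z => (hfn fun p => z (vars p.1 p.2)).symm

/-- An operation of arity `n + 2 > |A| + 1` is the superposition of the `(|A| + 1)`-ary switch
`u ↦ u (1 + u 0)` (reading `u 0` as a number below `|A|`) with the first projection and the
`(n + 1)`-ary operations obtained by fixing the first argument. -/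
lemma IsSPreclone.eq_univ_of_forall_n_le_card [Fintype A] (hF : IsSPreclone F)
    (hsmall : ∀ g : SOp S A, g.n ≤ Fintype.card A → g ∈ F) : F = Set.univ := by
  refine Set.eq_univ_of_forall fun f => ?_
  induction h : f.n using Nat.strong_induction_on generalizing f with
  | _ N IH =>
  by_cases hle : f.n ≤ Fintype.card A
  · exact hsmall f hle
  obtain ⟨_ | n, fn, sg⟩ := f
  · simp at hle
  let eA := Fintype.equivFin A
  let switch : SOp S A :=
    ⟨Fintype.card A, fun u => u (eA (u 0)).succ, Fin.cons (sg 0) fun _ => 1⟩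
  let fixFirst : A → SOp S A := fun a => ⟨n, fun y => fn (Fin.cons a y), sg ∘ Fin.succ⟩
  let g : Fin (Fintype.card A + 1) → SOp S A := Fin.cons (idOp S A) (fixFirst ∘ eA.symm)
  have hg : ∀ i, g i ∈ F := Fin.cases hF.1 fun i => IH n (by simp only at h; omega) _ rfl
  have hmem := hF.superpose_mem (f := switch) (hsmall _ le_rfl) hg
    (Fin.cases (motive := fun i => Fin ((g i).n + 1) → Fin (n + 2)) (fun _ => 0)
      fun _ => Fin.succ) (μ := sg) (fun i j => by
        cases i using Fin.cases with
        | zero => exact one_mul _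
        | succ i => exact mul_one _)
  convert hmem using 1
  simp only [SOp.mk.injEq, heq_eq_eq, true_and, and_true]
  funext z
  show fn z = fn (Fin.cons (eA.symm (eA (z 0))) fun j => z j.succ)
  rw [Equiv.symm_apply_apply]
  exact congrArg fn (Fin.cons_self_tail z).symm

end Superposition

section Relations

variable {S A : Type*} [Monoid S] {F : Set (SOp S A)}

namespace SPreserves

variable {f g : SOp S A} {ρ : SRel S A}

lemma minor (h : SPreserves f ρ) {m : ℕ} {φ : Fin (f.n + 1) → Fin (m + 1)} {μ : Fin (m + 1) → S}
    (hμ : ∀ v, f.sgn v = μ (φ v)) : SPreserves (f.minor φ μ) ρ :=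
  fun s r hr => h s (r ∘ φ) fun v => hμ v ▸ hr (φ v)

lemma idOp : SPreserves (idOp S A) ρ :=
  fun s r hr => show r 0 ∈ ρ.rel s by simpa [SPreclone.idOp] using hr 0

lemma cycOp (h : SPreserves f ρ) : SPreserves (cycOp f) ρ :=
  h.minor (φ := (· + 1)) (μ := fun i => f.sgn (i - 1)) fun v => by simp

lemma swapOp (h : SPreserves f ρ) : SPreserves (swapOp f) ρ :=
  h.minor (φ := Equiv.swap 0 1) (μ := fun i => f.sgn (Equiv.swap 0 1 i)) fun v => by simp

lemma nablaOp (h : SPreserves f ρ) (s : S) : SPreserves (nablaOp s f) ρ :=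
  h.minor (φ := Fin.succ) (μ := Fin.cons s f.sgn) fun _ => rfl

lemma deltaOp (h : SPreserves f ρ) : SPreserves (deltaOp f) ρ := by
  obtain ⟨_ | k, fn, sg⟩ := f
  · exact h
  by_cases hs : sg 0 = sg 1
  · simp only [SPreclone.deltaOp, if_pos hs]
    refine h.minor (φ := fun j : Fin (k + 2) => ⟨j - 1, by omega⟩) (μ := sg ∘ Fin.succ) fun v => ?_
    rcases Fin.eq_zero_or_eq_succ v with rfl | ⟨j, rfl⟩
    · exact hs
    · simp
  · simpa only [SPreclone.deltaOp, if_neg hs] using h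

lemma compOp (hf : SPreserves f ρ) (hg : SPreserves g ρ) : SPreserves (compOp f g) ρ := by
  intro s r hr
  let r' := r ∘ (compOpEquiv f g).symm
  have hr' : ∀ p, r' p ∈ ρ.rel
      (Sum.elim (fun j => g.sgn j * f.sgn 0) (f.sgn ∘ Fin.succ) p * s) := fun p => by
    simpa [r', compOp_sgn] using hr ((compOpEquiv f g).symm p)
  have hcol := hg (f.sgn 0 * s) (r' ∘ Sum.inl) fun j => by simpa [mul_assoc] using hr' (.inl j)
  convert hf s (Fin.cons _ (r' ∘ Sum.inr)) (Fin.cases hcol fun j => hr' (.inr j)) using 1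
  funext q
  convert compOp_fn_comp f g (fun p => r' p q) using 2
  · funext v
    simp [r']
  · funext i
    cases i using Fin.cases <;> rfl

end SPreserves

lemma isSPreclone_SPol (Q : Set (SRel S A)) : IsSPreclone (SPol Q) :=
  ⟨fun _ _ => .idOp, fun _ hf ρ hρ => (hf ρ hρ).cycOp, fun _ hf ρ hρ => (hf ρ hρ).swapOp,
    fun s _ hf ρ hρ => (hf ρ hρ).nablaOp s, fun _ hf ρ hρ => (hf ρ hρ).deltaOp,
    fun _ hf _ hg ρ hρ => (hf ρ hρ).compOp (hg ρ hρ)⟩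

/-- Beyond arity `|S| · |A|^(m+1)` two arguments with equal signa receive equal columns, and
merging them lowers the arity. -/
lemma IsSPreclone.SPreserves_of_forall_n_lt [Fintype S] [Fintype A] (hF : IsSPreclone F)
    {ρ : SRel S A}
    (hsmall : ∀ f ∈ F, f.n < Fintype.card S * Fintype.card A ^ (ρ.m + 1) → SPreserves f ρ)
    {f : SOp S A} (hf : f ∈ F) : SPreserves f ρ := by
  induction h : f.n using Nat.strong_induction_on generalizing f with
  | _ N IH =>
  by_cases hlt : f.n < Fintype.card S * Fintype.card A ^ (ρ.m + 1)
  · exact hsmall f hf hlt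
  intro s r hr
  obtain ⟨a, b, hab, heq⟩ :=
    Fintype.exists_ne_map_eq_of_card_lt (fun v => (f.sgn v, r v)) (by
      simp only [Fintype.card_prod, Fintype.card_pi, Finset.prod_const, Finset.card_univ,
        Fintype.card_fin]
      omega)
  obtain ⟨g, hg, hgn, ψ, hfn, hsgn⟩ := hF.exists_merge hf hab (congrArg Prod.fst heq)
  convert IH g.n (h ▸ hgn) hg rfl s (r ∘ ψ) (fun w => hsgn w ▸ hr (ψ w)) using 1
  funext q
  exact hfn (fun v => r v q) (congrFun (congrArg Prod.snd heq) q)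

def IsRealized (F : Set (SOp S A)) {n₀ : ℕ} (lam : Fin (n₀ + 1) → S) (s : S)
    (b : (Fin (n₀ + 1) → A) → A) : Prop :=
  ∃ T ∈ F, ∃ φ : Fin (T.n + 1) → Fin (n₀ + 1),
    (∀ z, T.fn (z ∘ φ) = b z) ∧ ∀ v, T.sgn v * s = lam (φ v)

lemma IsSPreclone.isRealized_proj (hF : IsSPreclone F) {n₀ : ℕ} (lam : Fin (n₀ + 1) → S)
    (j : Fin (n₀ + 1)) : IsRealized F lam (lam j) fun z => z j :=
  ⟨idOp S A, hF.1, fun _ => j, fun _ => rfl, fun _ => one_mul _⟩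

lemma IsSPreclone.isRealized_apply (hF : IsSPreclone F) {n₀ : ℕ} {lam : Fin (n₀ + 1) → S}
    {f : SOp S A} (hf : f ∈ F) {s : S} {r : Fin (f.n + 1) → (Fin (n₀ + 1) → A) → A}
    (hr : ∀ i, IsRealized F lam (f.sgn i * s) (r i)) :
    IsRealized F lam s fun z => f.fn fun i => r i z := by
  choose T hT φ hφ hsgn using hr
  obtain ⟨D, hD, w, hfn, hDsgn⟩ := hF.exists_superpose hf hT
  refine ⟨D, hD, fun v => φ (w v).1 (w v).2, fun z => ?_, fun v => ?_⟩
  · exact (hfn fun p => z (φ p.1 p.2)).trans (congrArg f.fn (funext fun i => hφ i z))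
  · rw [hDsgn, mul_assoc]
    exact hsgn _ _

lemma IsSPreclone.mem_of_isRealized (hF : IsSPreclone F) {n₀ : ℕ} {lam : Fin (n₀ + 1) → S}
    {b : (Fin (n₀ + 1) → A) → A} (h : IsRealized F lam 1 b) : (⟨n₀, b, lam⟩ : SOp S A) ∈ F := by
  obtain ⟨T, hT, φ, hfn, hsgn⟩ := h
  convert hF.minor_mem hT φ (μ := lam) (fun v => by simpa using hsgn v) using 1
  simp only [SOp.minor, SOp.mk.injEq, heq_eq_eq, true_and, and_true]
  exact funext fun z => (hfn z).symm

noncomputable def _root_.finCardPredSuccEquiv (α : Type*) [Fintype α] [Nonempty α] :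
    Fin (Fintype.card α - 1 + 1) ≃ α :=
  (finCongr (Nat.sub_add_cancel Fintype.card_pos)).trans (Fintype.equivFin α).symm

/-- `Γ_F(χ^λ)`, with its rows indexed by `Fin (n₀ + 1) → A`. -/
noncomputable def realizedRel [Fintype A] [Nonempty A] (F : Set (SOp S A)) {n₀ : ℕ}
    (lam : Fin (n₀ + 1) → S) : SRel S A :=
  ⟨Fintype.card (Fin (n₀ + 1) → A) - 1,
    fun s => {c | IsRealized F lam s (c ∘ (finCardPredSuccEquiv _).symm)}⟩

variable [Fintype A] [Nonempty A]

lemma realizedRel_m {n₀ : ℕ} (lam : Fin (n₀ + 1) → S) :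
    (realizedRel F lam).m + 1 = Fintype.card A ^ (n₀ + 1) := by
  simpa [realizedRel] using Nat.sub_add_cancel (Nat.one_le_pow _ _ (Fintype.card_pos (α := A)))

lemma IsSPreclone.realizedRel_mem_SInv (hF : IsSPreclone F) {n₀ : ℕ} (lam : Fin (n₀ + 1) → S) :
    realizedRel F lam ∈ SInv F :=
  fun _ hf _ _ hr => hF.isRealized_apply hf hr

lemma IsSPreclone.not_SPreserves_realizedRel (hF : IsSPreclone F) {g : SOp S A} (hg : g ∉ F) :
    ¬SPreserves g (realizedRel F g.sgn) := by
  intro h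
  let E := finCardPredSuccEquiv (Fin (g.n + 1) → A)
  have hcol := h 1 (fun i q => E q i) fun i =>
    show IsRealized F g.sgn (g.sgn i * 1) ((fun q => E q i) ∘ E.symm) by
      simpa [Function.comp_def] using hF.isRealized_proj g.sgn i
  have hmem := hF.mem_of_isRealized (b := fun z => g.fn fun i => E (E.symm z) i) hcol
  simp only [Equiv.apply_symm_apply] at hmem
  exact hg hmem

end Relations

section Swierczkowski

open Function

variable {A : Type*}

lemma _root_.exists_not_and_not_and_not {α : Type*} [Finite α] (hα : 3 < Nat.card α)
    {P Q R : α → Prop} (hP : {t | P t}.Subsingleton) (hQ : {t | Q t}.Subsingleton)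
    (hR : {t | R t}.Subsingleton) : ∃ t, ¬P t ∧ ¬Q t ∧ ¬R t := by
  by_contra! h
  have hcover : (Set.univ : Set α) ⊆ {t | P t} ∪ {t | Q t} ∪ {t | R t} := fun t _ => by
    by_cases hp : P t
    · exact .inl (.inl hp)
    by_cases hq : Q t
    · exact .inl (.inr hq)
    · exact .inr (h t hp hq)
  have := Set.ncard_le_ncard hcover
  rw [Set.ncard_univ] at this
  have := Set.ncard_union_le ({t | P t} ∪ {t | Q t}) {t | R t}
  have := Set.ncard_union_le {t | P t} {t | Q t}
  have := Set.ncard_le_one_iff_subsingleton.2 hP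
  have := Set.ncard_le_one_iff_subsingleton.2 hQ
  have := Set.ncard_le_one_iff_subsingleton.2 hR
  omega

lemma _root_.eq_or_mem_pair_of_forall_apply_eq [Nontrivial A] {ι : Type*} {i i' u u' a b : ι}
    (hdisj : Disjoint ({i, i'} : Set ι) {u, u'})
    (h : ∀ x : ι → A, x i = x i' → x u = x u' → x a = x b) :
    a = b ∨ (a ∈ ({i, i'} : Set ι) ∧ b ∈ ({i, i'} : Set ι)) ∨
      (a ∈ ({u, u'} : Set ι) ∧ b ∈ ({u, u'} : Set ι)) := by
  classical
  obtain ⟨a₀, a₁, h₀₁⟩ := exists_pair_ne A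
  have hne : i ≠ u ∧ i ≠ u' ∧ i' ≠ u ∧ i' ≠ u' := by
    simp only [Set.disjoint_insert_left, Set.disjoint_insert_right, Set.disjoint_singleton,
      Set.mem_insert_iff, Set.mem_singleton_iff, not_or] at hdisj
    tauto
  -- the class of `a` under the two identifications
  let cls : ι → Prop := fun v => v = a ∨ (v ∈ ({i, i'} : Set ι) ∧ a ∈ ({i, i'} : Set ι)) ∨
    (v ∈ ({u, u'} : Set ι) ∧ a ∈ ({u, u'} : Set ι))
  have hab := h (fun v => if cls v then a₀ else a₁) (by simp only [cls]; grind)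
    (by simp only [cls]; grind)
  simp only [cls, true_or, if_true] at hab
  split_ifs at hab with hb
  · grind
  · exact absurd hab h₀₁

lemma _root_.subsingleton_setOf_apply_mem_and_exists_eq {ι : Type*} {pair : Fin 4 → Set ι}
    (hdisj : Pairwise (Disjoint on pair)) {p : Fin 4 → ι}
    (hsep : ∀ t t', t ≠ t' → p t = p t' ∨ (p t ∈ pair t ∧ p t' ∈ pair t) ∨
      (p t ∈ pair t' ∧ p t' ∈ pair t')) :
    {t | p t ∈ pair t}.Subsingleton ∧ ∃ t₀, p t₀ ∉ pair t₀ ∧ ∀ t, p t ∉ pair t → p t = p t₀ := by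
  have hto : ∀ t t', t ≠ t' → p t ∈ pair t → p t' ∈ pair t := fun t t' h hs => by
    rcases hsep t t' h with h' | h' | h'
    · exact h' ▸ hs
    · exact h'.2
    · exact absurd h'.1 (Set.disjoint_left.1 (hdisj h) hs)
  have hsub : {t | p t ∈ pair t}.Subsingleton := by
    intro t ht t' ht'
    by_contra h
    obtain ⟨t'', h₁, h₂, -⟩ := exists_not_and_not_and_not (α := Fin 4) (by simp)
      (P := (· = t)) (Q := (· = t')) (R := fun _ => False) (fun _ h _ h' => h.trans h'.symm)
      (fun _ h _ h' => h.trans h'.symm) (by simp)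
    exact Set.disjoint_left.1 (hdisj h) (hto t t'' (Ne.symm h₁) ht) (hto t' t'' (Ne.symm h₂) ht')
  obtain ⟨t₀, ht₀, -, -⟩ := exists_not_and_not_and_not (α := Fin 4) (by simp) hsub
    (Q := fun _ => False) (R := fun _ => False) (by simp) (by simp)
  refine ⟨hsub, t₀, ht₀, fun t ht => ?_⟩
  by_cases h : t = t₀
  · rw [h]
  rcases hsep t t₀ h with h' | h' | h'
  · exact h'
  · exact absurd h'.1 ht
  · exact absurd h'.2 ht₀

/-- Świerczkowski's lemma, relative to a class `C` of arguments. -/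
lemma _root_.exists_forall_eq_apply_of_forall_pair [Fintype A] [Nontrivial A] {ι : Type*}
    (f : (ι → A) → A) (P : ι → Prop) (C : Finset ι) (hC : max (Fintype.card A + 1) 8 ≤ C.card)
    (hf : ∀ i ∈ C, ∀ i' ∈ C, i ≠ i' → ∃ p, P p ∧ ∀ x, x i = x i' → f x = x p) :
    ∃ k, P k ∧ ∀ x, f x = x k := by
  obtain ⟨η⟩ : Nonempty (Fin 4 × Bool ↪ C) :=
    Function.Embedding.nonempty_of_card_le (by
      simp only [Fintype.card_prod, Fintype.card_fin, Fintype.card_bool, Fintype.card_coe]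
      omega)
  let pair : Fin 4 → Set ι := fun t => {(η (t, false)).1, (η (t, true)).1}
  have hdisj : Pairwise (Disjoint on pair) := fun t t' h => by
    simp [pair, Ne.symm h]
  choose p hpP hp using fun t => hf _ (η (t, false)).2 _ (η (t, true)).2 (by simp)
  obtain ⟨hselfish, t₀, -, hk⟩ := subsingleton_setOf_apply_mem_and_exists_eq hdisj
    fun t t' h => eq_or_mem_pair_of_forall_apply_eq (hdisj h)
      fun x h₁ h₂ => (hp t x h₁).symm.trans (hp t' x h₂)
  refine ⟨p t₀, hpP t₀, fun x => ?_⟩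
  obtain ⟨u, hu, u', hu', huu', hx⟩ := Finset.exists_ne_map_eq_of_card_lt_of_maps_to
    (s := C) (t := Finset.univ) (by rw [Finset.card_univ]; omega) (fun a _ => Finset.mem_univ (x a))
  obtain ⟨q, -, hq⟩ := hf u hu u' hu' huu'
  have hmem_pair : ∀ v, {t | v ∈ pair t}.Subsingleton := fun v t ht t' ht' => by
    by_contra h
    exact Set.disjoint_left.1 (hdisj h) ht ht'
  obtain ⟨t, ht, htu, htu'⟩ := exists_not_and_not_and_not (α := Fin 4) (by simp) hselfish
    (hmem_pair u) (hmem_pair u')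
  rw [hq x hx, ← hk t ht]
  have hdisj' : Disjoint (pair t) {u, u'} := by
    simp only [Set.disjoint_insert_right, Set.disjoint_singleton_right]
    exact ⟨htu, htu'⟩
  rcases eq_or_mem_pair_of_forall_apply_eq hdisj' (a := p t) (b := q)
    (fun y h₁ h₂ => (hp t y h₁).symm.trans (hq y h₂)) with h | h | ⟨h₁, h₂⟩
  · rw [h]
  · exact absurd h.1 ht
  · simp only [Set.mem_insert_iff, Set.mem_singleton_iff] at h₁ h₂
    rcases h₁ with rfl | rfl <;> rcases h₂ with rfl | rfl <;> simp [hx]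

end Swierczkowski

section Finiteness

variable {S A : Type*} [Finite S] [Finite A]

lemma finite_setOf_n_lt (B : ℕ) : {f : SOp S A | f.n < B}.Finite := by
  refine (Set.finite_range fun p : Σ n : Fin B, ((Fin (n + 1) → A) → A) × (Fin (n + 1) → S) =>
    (⟨p.1, p.2.1, p.2.2⟩ : SOp S A)).subset ?_
  rintro ⟨n, fn, sg⟩ (hn : n < B)
  exact ⟨⟨⟨n, hn⟩, fn, sg⟩, rfl⟩

lemma finite_of_eq_of_forall_n_lt {𝓕 : Set (Set (SOp S A))} (B : ℕ)
    (h : ∀ F₁ ∈ 𝓕, ∀ F₂ ∈ 𝓕, (∀ f : SOp S A, f.n < B → (f ∈ F₁ ↔ f ∈ F₂)) → F₁ = F₂) :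
    𝓕.Finite := by
  refine Set.Finite.of_finite_image (f := fun F => F ∩ {f | f.n < B})
    ((finite_setOf_n_lt B).finite_subsets.subset ?_) fun F₁ h₁ F₂ h₂ heq => ?_
  · rintro _ ⟨F, -, rfl⟩
    exact Set.inter_subset_right
  · exact h F₁ h₁ F₂ h₂ fun f hf => by simpa [hf] using congrArg (f ∈ ·) heq

end Finiteness

section Minimal

variable {S A : Type*} [Monoid S] {F : Set (SOp S A)}

lemma isSPreclone_SSg (G : Set (SOp S A)) : IsSPreclone (SSg G) :=
  ⟨fun _ hH => hH.1.1, fun f hf H hH => hH.1.2.1 f (hf H hH),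
    fun f hf H hH => hH.1.2.2.1 f (hf H hH), fun s f hf H hH => hH.1.2.2.2.1 s f (hf H hH),
    fun f hf H hH => hH.1.2.2.2.2.1 f (hf H hH),
    fun f hf g hg H hH => hH.1.2.2.2.2.2 f (hf H hH) g (hg H hH)⟩

lemma subset_SSg (G : Set (SOp S A)) : G ⊆ SSg G := fun _ hf _ hH => hH.2 hf

lemma IsSPreclone.SSg_subset (hF : IsSPreclone F) {G : Set (SOp S A)} (hG : G ⊆ F) :
    SSg G ⊆ F :=
  fun _ hf => hf F ⟨hF, hG⟩

lemma IsSPreclone.eq_SSg_singleton_of_minimal (hF : IsSPreclone F)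
    (hmin : ∀ G, IsSPreclone G → G ⊂ F → G = SJ S A) {g : SOp S A} (hg : g ∈ F)
    (hgJ : g ∉ SJ S A) : F = SSg {g} := by
  by_contra h
  refine hgJ ?_
  rw [← hmin _ (isSPreclone_SSg {g})
    ((hF.SSg_subset (Set.singleton_subset_iff.2 hg)).ssubset_of_ne (Ne.symm h))]
  exact subset_SSg _ rfl

variable [Fintype S] [Fintype A]

lemma IsSPreclone.mem_SJ_of_forall_n_lt [Nontrivial A] (hF : IsSPreclone F) {f : SOp S A}
    (hf : f ∈ F) (hbig : Fintype.card S * max (Fintype.card A + 1) 8 ≤ f.n)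
    (hsmall : ∀ g ∈ F, g.n < f.n → g ∈ SJ S A) : f ∈ SJ S A := by
  classical
  obtain ⟨s₀, hs₀⟩ := Fintype.exists_lt_card_fiber_of_mul_lt_card f.sgn
    (n := max (Fintype.card A + 1) 8) (by rw [Fintype.card_fin]; omega)
  refine exists_forall_eq_apply_of_forall_pair f.fn (f.sgn · = 1) _ hs₀.le
    fun i hi i' hi' hne => ?_
  simp only [Finset.mem_filter, Finset.mem_univ, true_and] at hi hi'
  obtain ⟨g, hg, hgn, ψ, hfn, hsgn⟩ := hF.exists_merge hf hne (hi.trans hi'.symm)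
  obtain ⟨j, hj, hgj⟩ := hsmall g hg hgn
  exact ⟨ψ j, (hsgn j).symm.trans hj, fun x hx => (hfn x hx).trans (hgj _)⟩

lemma IsSPreclone.exists_notMem_SJ_n_lt [Nontrivial A] (hF : IsSPreclone F)
    (hne : F ≠ SJ S A) :
    ∃ g ∈ F, g ∉ SJ S A ∧ g.n < Fintype.card S * max (Fintype.card A + 1) 8 := by
  obtain ⟨f, hf, hfJ⟩ : ∃ f ∈ F, f ∉ SJ S A := by
    by_contra! h
    exact hne (Set.Subset.antisymm (fun f hf => h f hf) hF.SJ_subset)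
  induction h : f.n using Nat.strong_induction_on generalizing f with
  | _ N IH =>
  by_cases hlt : f.n < Fintype.card S * max (Fintype.card A + 1) 8
  · exact ⟨f, hf, hfJ, hlt⟩
  by_cases hsmall : ∃ g ∈ F, g.n < f.n ∧ g ∉ SJ S A
  · obtain ⟨g, hg, hgn, hgJ⟩ := hsmall
    exact IH g.n (h ▸ hgn) g hg hgJ rfl
  · exact absurd (hF.mem_SJ_of_forall_n_lt hf (not_lt.1 hlt) fun g hg hgn =>
      by_contra fun hgJ => hsmall ⟨g, hg, hgn, hgJ⟩) hfJ

end Minimal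

section Maximal

variable {S A : Type*} [Monoid S] {F : Set (SOp S A)}

def SInvLT (F : Set (SOp S A)) (M : ℕ) : Set (SRel S A) := {ρ | ρ ∈ SInv F ∧ ρ.m < M}

variable [Fintype A] [Nonempty A]

lemma IsSPreclone.SPol_SInvLT_ne_univ (hF : IsSPreclone F) (hne : F ≠ Set.univ) :
    SPol (SInvLT F (Fintype.card A ^ (Fintype.card A + 1))) ≠ Set.univ := by
  obtain ⟨g, hgF, hgn⟩ : ∃ g ∉ F, g.n ≤ Fintype.card A := by
    by_contra! h
    exact hne (hF.eq_univ_of_forall_n_le_card fun g hg => by_contra fun hgF => (h g hgF).not_ge hg)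
  intro huniv
  have hm := realizedRel_m (F := F) g.sgn
  have hle := Nat.pow_le_pow_right (Fintype.card_pos (α := A))
    (by omega : g.n + 1 ≤ Fintype.card A + 1)
  have hgQ : g ∈ SPol (SInvLT F (Fintype.card A ^ (Fintype.card A + 1))) :=
    huniv ▸ Set.mem_univ g
  exact hF.not_SPreserves_realizedRel hgF (hgQ _ ⟨hF.realizedRel_mem_SInv _, by omega⟩)

lemma IsSPreclone.eq_SPol_SInvLT_of_maximal (hF : IsSPreclone F) (hne : F ≠ Set.univ)
    (hmax : ∀ G, IsSPreclone G → F ⊂ G → G = Set.univ) :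
    F = SPol (SInvLT F (Fintype.card A ^ (Fintype.card A + 1))) := by
  have hsub : F ⊆ SPol (SInvLT F (Fintype.card A ^ (Fintype.card A + 1))) :=
    fun f hf _ hρ => hρ.1 f hf
  by_contra h
  exact hF.SPol_SInvLT_ne_univ hne (hmax _ (isSPreclone_SPol _) (hsub.ssubset_of_ne h))

lemma SInvLT_subset_of_forall_n_lt [Fintype S] {F₁ F₂ : Set (SOp S A)} (hF₂ : IsSPreclone F₂)
    {M : ℕ}
    (h : ∀ f : SOp S A, f.n < Fintype.card S * Fintype.card A ^ M → f ∈ F₂ → f ∈ F₁) :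
    SInvLT F₁ M ⊆ SInvLT F₂ M := by
  rintro ρ ⟨hρ, hm⟩
  refine ⟨fun f hf => hF₂.SPreserves_of_forall_n_lt (fun f hf hlt => hρ f (h f ?_ hf)) hf, hm⟩
  exact hlt.trans_le (Nat.mul_le_mul_left _ (Nat.pow_le_pow_right Fintype.card_pos hm))

end Maximal

/-- On a finite set `A` with at least two elements there are only finitely many
maximal `S`-preclones and only finitely many minimal `S`-preclones. -/
theorem finitely_many_maximal_minimal_SPreclones {S A : Type*} [Monoid S] [Fintype S]
    [Fintype A] [Nontrivial A] :
    { F : Set (SOp S A) | IsSPreclone F ∧ F ≠ Set.univ ∧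
        ∀ G, IsSPreclone G → F ⊂ G → G = Set.univ }.Finite ∧
    { F : Set (SOp S A) | IsSPreclone F ∧ F ≠ SJ S A ∧
        ∀ G, IsSPreclone G → G ⊂ F → G = SJ S A }.Finite := by
  constructor
  · refine finite_of_eq_of_forall_n_lt
      (Fintype.card S * Fintype.card A ^ Fintype.card A ^ (Fintype.card A + 1)) ?_
    rintro F₁ ⟨hF₁, hne₁, hmax₁⟩ F₂ ⟨hF₂, hne₂, hmax₂⟩ hagree
    have hinv := (SInvLT_subset_of_forall_n_lt hF₂ fun f hf => (hagree f hf).2).antisymm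
      (SInvLT_subset_of_forall_n_lt hF₁ fun f hf => (hagree f hf).1)
    rw [hF₁.eq_SPol_SInvLT_of_maximal hne₁ hmax₁, hF₂.eq_SPol_SInvLT_of_maximal hne₂ hmax₂, hinv]
  · refine finite_of_eq_of_forall_n_lt (Fintype.card S * max (Fintype.card A + 1) 8) ?_
    rintro F₁ ⟨hF₁, hne₁, hmin₁⟩ F₂ ⟨hF₂, -, hmin₂⟩ hagree
    obtain ⟨g, hg, hgJ, hgn⟩ := hF₁.exists_notMem_SJ_n_lt hne₁
    rw [hF₁.eq_SSg_singleton_of_minimal hmin₁ hg hgJ,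
      hF₂.eq_SSg_singleton_of_minimal hmin₂ ((hagree g hgn).1 hg) hgJ]

end SPreclone
end
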